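/- arXiv:2306.12630 — 2 statements merged into one kernel-verified Lean document; each statement's English description precedes it below -/
import Mathlib

section
/- Let p be an odd prime and a ∈ F_p. Then there exists x ∈ F_p such that x² = a, or x² + 1 = a, or x² ≠ 1 and 1/(1 − x²) = a. -/
/-! If neither `a` nor `a - 1` is a square, then `a⁻¹` and `a - 1` are both nonsquares, so their
product `1 - a⁻¹` is a square `x²`, and then `1 / (1 - x²) = a`. -/

namespace FiniteField

variable {F : Type*} [Field F] [Fintype F]

theorem isSquare_mul_of_not_isSquare {a b : F} (ha : ¬IsSquare a) (hb : ¬IsSquare b) :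
    IsSquare (a * b) := by
  classical
  have ha₀ : a ≠ 0 := by rintro rfl; exact ha IsSquare.zero
  have hb₀ : b ≠ 0 := by rintro rfl; exact hb IsSquare.zero
  rw [← quadraticChar_one_iff_isSquare (mul_ne_zero ha₀ hb₀), map_mul,
    quadraticChar_neg_one_iff_not_isSquare.mpr ha, quadraticChar_neg_one_iff_not_isSquare.mpr hb]
  norm_num

theorem exists_sq_or_sq_add_one_or_one_div_one_sub_sq (a : F) :
    ∃ x : F, x ^ 2 = a ∨ x ^ 2 + 1 = a ∨ (x ^ 2 ≠ 1 ∧ 1 / (1 - x ^ 2) = a) := by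
  by_cases ha : IsSquare a
  · obtain ⟨x, rfl⟩ := ha
    exact ⟨x, .inl (sq x)⟩
  by_cases ha₁ : IsSquare (a - 1)
  · obtain ⟨x, hx⟩ := ha₁
    exact ⟨x, .inr (.inl (by rw [sq, ← hx, sub_add_cancel]))⟩
  have ha₀ : a ≠ 0 := by rintro rfl; exact ha IsSquare.zero
  obtain ⟨x, hx⟩ := isSquare_mul_of_not_isSquare ha₁ (fun h ↦ ha (isSquare_inv.mp h))
  have hx₁ : 1 - x ^ 2 = a⁻¹ := by rw [sq, ← hx, sub_mul, mul_inv_cancel₀ ha₀]; ring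
  refine ⟨x, .inr (.inr ⟨fun h ↦ ?_, by rw [hx₁, one_div, inv_inv]⟩)⟩
  rw [h, sub_self] at hx₁
  exact inv_ne_zero ha₀ hx₁.symm

end FiniteField

theorem three_functions_cover_general (p : ℕ) [Fact p.Prime] (a : ZMod p) :
    ∃ x : ZMod p, x ^ 2 = a ∨ x ^ 2 + 1 = a ∨ (x ^ 2 ≠ 1 ∧ 1 / (1 - x ^ 2) = a) :=
  FiniteField.exists_sq_or_sq_add_one_or_one_div_one_sub_sq a

theorem three_functions_cover (p : ℕ) [Fact p.Prime] (hp : p ≠ 2) (a : ZMod p) :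
    ∃ x : ZMod p, x ^ 2 = a ∨ x ^ 2 + 1 = a ∨ (x ^ 2 ≠ 1 ∧ 1 / (1 - x ^ 2) = a) :=
  three_functions_cover_general p a
end

section
/- Let G be a finite group, L a normal subgroup of G, and U₁, …, U_r subgroups of G. Assume that every coset of L in G contains an element g such that for all i, no G-conjugate of g lies in U_i (equivalently, g is fixed-point-free in the action of G on cosets of each U_i). Then for every k ≥ 2, every coset of L^k in the wreath product W = G^k ⋊ S_k contains an element x such that for all i, x is fixed-point-free in the action of W on the coset space W/((U_i)^k ⋊ S_k). -/
theorem wreath_fixed_point_free_cosets (G : Type*) [Group G] [Finite G]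
    (L : Subgroup G) [L.Normal] (r : ℕ) (U : Fin r → Subgroup G)
    (h : ∀ g₀ : G, ∃ g : G, g⁻¹ * g₀ ∈ L ∧ ∀ i : Fin r, ∀ ω : G ⧸ U i, g • ω ≠ ω)
    (k : ℕ) (hk : 2 ≤ k) :
    ∀ (τ : Equiv.Perm (Fin k)) (g₀ : Fin k → G),
      ∃ g : Fin k → G, (∀ j, (g j)⁻¹ * g₀ j ∈ L) ∧
        ∀ i : Fin r, ¬ ∃ ω : Fin k → G ⧸ U i, ∀ j, g j • ω j = ω (τ j) := by
  intro τ g₀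
  haveI : NeZero k := ⟨by omega⟩
  set f : Fin k → Fin k := fun j => τ j with hf
  have hper : (0 : Fin k) ∈ Function.periodicPts f := by
    refine ⟨orderOf τ, orderOf_pos τ, ?_⟩
    show f^[orderOf τ] 0 = 0
    have h1 : f^[orderOf τ] = ⇑(τ ^ orderOf τ) := by
      ext x
      rw [Equiv.Perm.iterate_eq_pow]
    rw [h1, pow_orderOf_eq_one]
    rfl
  set m := Function.minimalPeriod f 0 with hm
  have hm1 : 1 ≤ m := Function.minimalPeriod_pos_of_mem_periodicPts hper
  have hfm : f^[m] 0 = 0 := Function.isPeriodicPt_minimalPeriod f 0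
  have hne : ∀ s, 1 ≤ s → s < m → f^[s] 0 ≠ 0 := by
    intro s hs1 hsm hcontra
    have : m ≤ s := Function.IsPeriodicPt.minimalPeriod_le (by omega) hcontra
    omega
  -- partial products of g₀ along the cycle of 0
  let Pr : (Fin k → G) → ℕ → G :=
    fun v s => Nat.rec 1 (fun n p => v (f^[n] 0) * p) s
  obtain ⟨t, htL, htff⟩ := h (Pr g₀ m)
  set g : Fin k → G := Function.update g₀ 0 (g₀ 0 * (Pr g₀ m)⁻¹ * t) with hg
  have hg0 : g 0 = g₀ 0 * (Pr g₀ m)⁻¹ * t := by simp [hg]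
  have hgj : ∀ j : Fin k, j ≠ 0 → g j = g₀ j := by
    intro j hj; simp [hg, Function.update_of_ne hj]
  refine ⟨g, ?_, ?_⟩
  · intro j
    by_cases hj : j = 0
    · subst hj
      rw [hg0]
      have : (g₀ 0 * (Pr g₀ m)⁻¹ * t)⁻¹ * g₀ 0 = t⁻¹ * Pr g₀ m := by
        group
      rw [this]; exact htL
    · rw [hgj j hj]
      simpa using L.one_mem
  · rintro i ⟨ω, hω⟩
    have key : ∀ s, 1 ≤ s → s ≤ m →
        ω (f^[s] 0) = (Pr g₀ s * (g₀ 0)⁻¹ * g 0) • ω 0 := by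
      intro s
      induction s with
      | zero => intro h1 _; omega
      | succ n ih =>
        intro _ hsm
        rcases Nat.eq_or_lt_of_le (Nat.one_le_iff_ne_zero.mpr (by omega) :
            1 ≤ n + 1) with h1 | h1
        · -- n = 0
          have hn : n = 0 := by omega
          subst hn
          have e1 : Pr g₀ 1 * (g₀ 0)⁻¹ * g 0 = g 0 := by
            have e0 : Pr g₀ 1 = g₀ (f^[0] 0) * 1 := rfl
            rw [e0, Function.iterate_zero_apply]
            group
          rw [Function.iterate_one]
          show ω (f 0) = (Pr g₀ 1 * (g₀ 0)⁻¹ * g 0) • ω 0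
          rw [e1, ← hω 0]
        · -- n ≥ 1
          have hn1 : 1 ≤ n := by omega
          have hnm : n < m := by omega
          have hih := ih hn1 (by omega)
          have hstep := hω (f^[n] 0)
          rw [Function.iterate_succ_apply']
          have : ω (f (f^[n] 0)) = g (f^[n] 0) • ω (f^[n] 0) := (hstep).symm
          rw [this, hgj _ (hne n hn1 hnm), hih, smul_smul]
          have hPr : Pr g₀ (n + 1) = g₀ (f^[n] 0) * Pr g₀ n := rfl
          rw [hPr]
          congr 1
          group
    have hfix := key m hm1 le_rfl
    rw [hfm, hg0] at hfix
    have : Pr g₀ m * (g₀ 0)⁻¹ * (g₀ 0 * (Pr g₀ m)⁻¹ * t) = t := by group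
    rw [this] at hfix
    exact htff i (ω 0) hfix.symm
end
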